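/- arXiv:2411.11051 — 9 statements merged into one kernel-verified Lean document; each statement's English description precedes it below -/
import Mathlib

section
/- Let Φ(x) = rank(x) be the potential function. For all rank-biased leftist heaps x and y, the amortized cost of merging, A(x,y) = T(x,y) + Φ(x∪y) − Φ(x) − Φ(y), equals rank(x∪y) and is at most log₂ s(x∪y). -/
inductive BTree (α : Type) : Type
  | nil : BTree α
  | node : BTree α → α → BTree α → BTree α

namespace BTree

variable {α : Type} [LinearOrder α]

/-- number of nodes -/
def size : BTree α → ℕ
  | nil => 0
  | node t _ u => size t + size u + 1

/-- size plus one -/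
def s (x : BTree α) : ℕ := size x + 1

def rank : BTree α → ℕ
  | nil => 0
  | node _ _ u => rank u + 1

/-- minor rank -/
def prank : BTree α → ℕ
  | nil => 0
  | node t _ _ => rank t + 1

/-- `a` is less than or equal to every label of the tree -/
def LeAll (a : α) : BTree α → Prop
  | nil => True
  | node t b u => a ≤ b ∧ LeAll a t ∧ LeAll a u

/-- heap property: every node's label is ≤ all labels in its subtrees -/
def IsHeap : BTree α → Prop
  | nil => True
  | node t a u => LeAll a t ∧ LeAll a u ∧ IsHeap t ∧ IsHeap u

/-- rank-biased leftist property -/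
def RankLeftist : BTree α → Prop
  | nil => True
  | node t _ u => rank u ≤ rank t ∧ RankLeftist t ∧ RankLeftist u

/-- weight-biased leftist property -/
def WeightLeftist : BTree α → Prop
  | nil => True
  | node t _ u => size u ≤ size t ∧ WeightLeftist t ∧ WeightLeftist u

/-- rank-biased balancing -/
def balR : BTree α → BTree α
  | nil => nil
  | node t a u => if rank u < rank t then node t a u else node u a t

/-- weight-biased balancing -/
def balW : BTree α → BTree α
  | nil => nil
  | node t a u => if size u < size t then node t a u else node u a t

/-- rank-biased merge -/
def mergeR : BTree α → BTree α → BTree α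
  | nil, nil => nil
  | nil, node v b w => balR (node v b (mergeR nil w))
  | node t a u, nil => balR (node t a (mergeR u nil))
  | node t a u, node v b w =>
      if a ≤ b then balR (node t a (mergeR u (node v b w)))
      else balR (node v b (mergeR (node t a u) w))
termination_by x y => rank x + rank y
decreasing_by all_goals simp [rank]

/-- weight-biased merge -/
def mergeW : BTree α → BTree α → BTree α
  | nil, nil => nil
  | nil, node v b w => balW (node v b (mergeW nil w))
  | node t a u, nil => balW (node t a (mergeW u nil))
  | node t a u, node v b w =>
      if a ≤ b then balW (node t a (mergeW u (node v b w)))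
      else balW (node v b (mergeW (node t a u) w))
termination_by x y => rank x + rank y
decreasing_by all_goals simp [rank]

/-- number of comparisons used when merging (independent of the balancing strategy) -/
def cost : BTree α → BTree α → ℕ
  | nil, nil => 0
  | nil, node _ _ w => cost nil w + 1
  | node _ _ u, nil => cost u nil + 1
  | node t a u, node v b w =>
      (if a ≤ b then cost u (node v b w) else cost (node t a u) w) + 1
termination_by x y => rank x + rank y
decreasing_by all_goals simp [rank]

theorem cost_eq_rank_add : ∀ x y : BTree α, cost x y = rank x + rank y
  | nil, nil => by simp [cost, rank]
  | nil, node v b w => by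
    simp [cost, rank, cost_eq_rank_add nil w]
  | node t a u, nil => by
    simp [cost, rank, cost_eq_rank_add u nil] <;> omega
  | node t a u, node v b w => by
    by_cases h : a ≤ b
    · have := cost_eq_rank_add u (node v b w)
      simp [cost, rank, h, this] <;> omega
    · have := cost_eq_rank_add (node t a u) w
      simp [cost, rank, h, this] <;> omega
termination_by x y => rank x + rank y
decreasing_by all_goals simp [rank]

theorem rankLeftist_balR {t u : BTree α} {a : α}
    (ht : RankLeftist t) (hu : RankLeftist u) :
    RankLeftist (balR (node t a u)) := by
  rw [balR]
  split_ifs with h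
  · exact ⟨le_of_lt h, ht, hu⟩
  · exact ⟨le_of_not_gt h, hu, ht⟩

theorem rankLeftist_mergeR : ∀ x y : BTree α,
    RankLeftist x → RankLeftist y → RankLeftist (mergeR x y)
  | nil, nil, _, _ => by rw [mergeR]; trivial
  | nil, node v b w, _, hy => by
    rw [mergeR]
    exact rankLeftist_balR hy.2.1 (rankLeftist_mergeR nil w trivial hy.2.2)
  | node t a u, nil, hx, _ => by
    rw [mergeR]
    exact rankLeftist_balR hx.2.1 (rankLeftist_mergeR u nil hx.2.2 trivial)
  | node t a u, node v b w, hx, hy => by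
    rw [mergeR]
    split
    · exact rankLeftist_balR hx.2.1
        (rankLeftist_mergeR u (node v b w) hx.2.2 hy)
    · exact rankLeftist_balR hy.2.1
        (rankLeftist_mergeR (node t a u) w hx hy.2.2)
termination_by x y => rank x + rank y
decreasing_by all_goals simp [rank]

theorem two_pow_rank_le_s : ∀ x : BTree α, RankLeftist x → 2 ^ rank x ≤ s x
  | nil, _ => by simp [rank, s, size]
  | node t a u, h => by
    have ht := two_pow_rank_le_s t h.2.1
    have hu := two_pow_rank_le_s u h.2.2
    have : (2:ℕ) ^ rank u ≤ 2 ^ rank t := Nat.pow_le_pow_right (by norm_num) h.1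
    simp only [rank, s, size, pow_succ]
    unfold s at ht hu
    omega

end BTree

/- With potential Φ(x) = rank(x), for all rank-biased leftist heaps x and y the
amortized cost of merging A(x,y) = T(x,y) + Φ(x∪y) − Φ(x) − Φ(y) equals rank(x∪y)
and is at most log₂ s(x∪y). -/
open BTree in
theorem amortized_union_rank_potential (α : Type) [LinearOrder α]
    (x y : BTree α) (hxh : IsHeap x) (hxl : RankLeftist x)
    (hyh : IsHeap y) (hyl : RankLeftist y) :
    (cost x y : ℝ) + (rank (mergeR x y) : ℝ) - (rank x : ℝ) - (rank y : ℝ)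
        = (rank (mergeR x y) : ℝ) ∧
    (cost x y : ℝ) + (rank (mergeR x y) : ℝ) - (rank x : ℝ) - (rank y : ℝ)
        ≤ Real.logb 2 (s (mergeR x y)) := by
  have hc := cost_eq_rank_add x y
  have hl := rankLeftist_mergeR x y hxl hyl
  have hp := two_pow_rank_le_s (mergeR x y) hl
  constructor
  · rw [hc]; push_cast; ring
  · rw [hc]
    have h1 : (cost x y : ℝ) ≥ 0 := Nat.cast_nonneg _
    have key : (rank (mergeR x y) : ℝ) ≤ Real.logb 2 (s (mergeR x y)) := by
      have h2 : ((2:ℝ) ^ rank (mergeR x y)) ≤ (s (mergeR x y) : ℝ) := by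
        exact_mod_cast hp
      calc (rank (mergeR x y) : ℝ)
          = Real.logb 2 ((2:ℝ) ^ rank (mergeR x y)) := by
            rw [Real.logb_pow, Real.logb_self_eq_one] <;> norm_num
        _ ≤ Real.logb 2 (s (mergeR x y)) :=
            Real.logb_le_logb_of_le (by norm_num) (by positivity) h2
    push_cast
    linarith [key]
end

section
/- Let φ = (√5+1)/2 be the golden ratio, α = φ^(2φ−1), and β = φ^(φ+2). For all positive real numbers m and n, log_β(β·n/(m+n)) ≤ log_α((m+n)/m). -/
/-- the golden ratio φ = (√5 + 1)/2 -/
noncomputable def goldPhi : ℝ := (Real.sqrt 5 + 1) / 2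

/-- β = φ^(φ+2) -/
noncomputable def goldBeta : ℝ := goldPhi ^ (goldPhi + 2)

/-- α = φ^(2φ-1) -/
noncomputable def goldAlpha : ℝ := goldPhi ^ (2 * goldPhi - 1)

lemma goldPhi_gt_one : 1 < goldPhi := by
  unfold goldPhi
  nlinarith [Real.sq_sqrt (by norm_num : (5:ℝ) ≥ 0), Real.sqrt_nonneg 5]

lemma goldPhi_sq : goldPhi ^ 2 = goldPhi + 1 := by
  unfold goldPhi
  have h : Real.sqrt 5 ^ 2 = 5 := Real.sq_sqrt (by norm_num)
  ring_nf
  nlinarith [h]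

/-- For all positive reals m and n, log_β(β·n/(m+n)) ≤ log_α((m+n)/m). -/
theorem logb_beta_le_logb_alpha (m n : ℝ) (hm : 0 < m) (hn : 0 < n) :
    Real.logb goldBeta (goldBeta * n / (m + n))
      ≤ Real.logb goldAlpha ((m + n) / m) := by
  have hφ1 : 1 < goldPhi := goldPhi_gt_one
  have hφ0 : (0:ℝ) < goldPhi := by linarith
  have hsq : goldPhi ^ 2 = goldPhi + 1 := goldPhi_sq
  set L := Real.log goldPhi with hLdef
  have hL : 0 < L := Real.log_pos hφ1
  have hmn : 0 < m + n := by linarith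
  set t : ℝ := n / (m + n) with htdef
  set s : ℝ := m / (m + n) with hsdef
  have ht0 : 0 < t := div_pos hn hmn
  have hs0 : 0 < s := div_pos hm hmn
  have hts : t + s = 1 := by
    rw [htdef, hsdef]; field_simp; ring
  have hβpos : 0 < goldBeta := Real.rpow_pos_of_pos hφ0 _
  have hlogβ : Real.log goldBeta = (goldPhi + 2) * L := by
    unfold goldBeta; rw [Real.log_rpow hφ0]
  have hlogα : Real.log goldAlpha = (2 * goldPhi - 1) * L := by
    unfold goldAlpha; rw [Real.log_rpow hφ0]
  have hlβ : 0 < Real.log goldBeta := by rw [hlogβ]; nlinarith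
  have hlα : 0 < Real.log goldAlpha := by rw [hlogα]; nlinarith
  -- rewrite arguments
  have harg : goldBeta * n / (m + n) = goldBeta * t := by
    rw [htdef]; ring
  have hlogt : Real.log t = Real.log n - Real.log (m + n) := by
    rw [htdef, Real.log_div hn.ne' hmn.ne']
  have hlogs : Real.log s = Real.log m - Real.log (m + n) := by
    rw [hsdef, Real.log_div hm.ne' hmn.ne']
  have hRarg : Real.log ((m + n) / m) = -Real.log s := by
    rw [Real.log_div hmn.ne' hm.ne', hlogs]; ring
  have hLHS : Real.logb goldBeta (goldBeta * n / (m + n))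
      = (Real.log goldBeta + Real.log t) / Real.log goldBeta := by
    rw [harg, Real.logb, Real.log_mul hβpos.ne' ht0.ne']
  have hRHS : Real.logb goldAlpha ((m + n) / m)
      = (-Real.log s) / Real.log goldAlpha := by
    rw [Real.logb, hRarg]
  rw [hLHS, hRHS, div_le_div_iff₀ hlβ hlα]
  -- tangent-line bounds
  have h1 : Real.log t + 2 * L ≤ t * goldPhi ^ 2 - 1 := by
    have h := Real.log_le_sub_one_of_pos (show 0 < t * goldPhi ^ 2 by positivity)
    rw [Real.log_mul ht0.ne' (by positivity), Real.log_pow] at h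
    push_cast at h; linarith
  have h2 : Real.log s + L ≤ s * goldPhi - 1 := by
    have h := Real.log_le_sub_one_of_pos (show 0 < s * goldPhi by positivity)
    rw [Real.log_mul hs0.ne' hφ0.ne'] at h
    linarith
  rw [hlogβ, hlogα]
  have c1 : (0:ℝ) ≤ (2 * goldPhi - 1) * L := by nlinarith
  have c2 : (0:ℝ) ≤ (goldPhi + 2) * L := by nlinarith
  have P1 := mul_le_mul_of_nonneg_left h1 c1
  have P2 := mul_le_mul_of_nonneg_left h2 c2
  have hid : (2*goldPhi-1)*L*(t*goldPhi^2-1) + (goldPhi+2)*L*(s*goldPhi-1) = 0 := by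
    linear_combination (2*goldPhi*L*t + L) * hsq + (goldPhi^2 + 2*goldPhi) * L * hts
  have hL2 : (goldPhi+2)*(2*goldPhi-1)*(L*L)
      = 2*((2*goldPhi-1)*L)*L + ((goldPhi+2)*L)*L := by
    linear_combination 2*(L*L)*hsq
  linarith [P1, P2, hid, hL2]
end

section
/- For all rank-biased leftist heaps x and y: min(rank(x), rank(y)) ≤ rank(x∪y) ≤ rank(x) + rank(y), where ∪ is the rank-biased merge. -/
/- For all rank-biased leftist heaps x and y:
min(rank x, rank y) ≤ rank(x∪y) ≤ rank x + rank y. -/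
namespace BTree

variable {α : Type} [LinearOrder α]

lemma rank_balR (t : BTree α) (a : α) (u : BTree α) :
    rank (balR (node t a u)) = min (rank t) (rank u) + 1 := by
  simp only [balR]
  split <;> simp only [rank] <;> omega

theorem rank_merge_key (x y : BTree α) (hxl : RankLeftist x) (hyl : RankLeftist y) :
    min (rank x) (rank y) ≤ rank (mergeR x y) ∧
    rank (mergeR x y) ≤ rank x + rank y := by
  match x, y with
  | nil, nil => simp [mergeR, rank]
  | nil, node v b w =>
      have ih := rank_merge_key nil w trivial hyl.2.2
      rw [mergeR, rank_balR]
      simp only [rank] at *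
      omega
  | node t a u, nil =>
      have ih := rank_merge_key u nil hxl.2.2 trivial
      rw [mergeR, rank_balR]
      simp only [rank] at *
      omega
  | node t a u, node v b w =>
      rw [mergeR]
      split
      · have ih := rank_merge_key u (node v b w) hxl.2.2 hyl
        have h1 : rank u ≤ rank t := hxl.1
        rw [rank_balR]
        simp only [rank] at *
        omega
      · have ih := rank_merge_key (node t a u) w hxl hyl.2.2
        have h1 : rank w ≤ rank v := hyl.1
        rw [rank_balR]
        simp only [rank] at *
        omega
termination_by rank x + rank y
decreasing_by all_goals simp [rank] <;> omega

end BTree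

open BTree in
theorem rank_merge_bounds (α : Type) [LinearOrder α]
    (x y : BTree α) (hxh : IsHeap x) (hxl : RankLeftist x)
    (hyh : IsHeap y) (hyl : RankLeftist y) :
    min (rank x) (rank y) ≤ rank (mergeR x y) ∧
    rank (mergeR x y) ≤ rank x + rank y := by
  exact rank_merge_key x y hxl hyl
end

section
/- For all rank-biased leftist heaps x and y: rank(x∪y) ≤ max(prank(x), prank(y)), where ∪ is the rank-biased merge and prank is the minor rank defined by prank(⟨⟩)=0 and prank(⟨t,a,u⟩)=rank(t)+1. -/
namespace BTree

variable {α : Type} [LinearOrder α]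

lemma rank_balR_le (t u : BTree α) (a : α) :
    rank (balR (node t a u)) ≤ rank t + 1 := by
  simp only [balR]
  split <;> simp [rank] <;> omega

end BTree

/- For all rank-biased leftist heaps x and y: rank(x∪y) ≤ max(prank x, prank y). -/
open BTree in
theorem rank_merge_le_max_prank (α : Type) [LinearOrder α]
    (x y : BTree α) (hxh : IsHeap x) (hxl : RankLeftist x)
    (hyh : IsHeap y) (hyl : RankLeftist y) :
    rank (mergeR x y) ≤ max (prank x) (prank y) := by
  match x, y with
  | nil, nil => simp [mergeR, rank]
  | nil, node v b w =>
      rw [mergeR]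
      exact le_trans (rank_balR_le _ _ _) (le_max_of_le_right (by simp [prank]))
  | node t a u, nil =>
      rw [mergeR]
      exact le_trans (rank_balR_le _ _ _) (le_max_of_le_left (by simp [prank]))
  | node t a u, node v b w =>
      rw [mergeR]
      split
      · exact le_trans (rank_balR_le _ _ _) (le_max_of_le_left (by simp [prank]))
      · exact le_trans (rank_balR_le _ _ _) (le_max_of_le_right (by simp [prank]))
end

section
/- For all rank-biased leftist heaps x and y: min(prank(x), prank(y)) ≤ prank(x∪y) ≤ prank(x) + prank(y), where ∪ is the rank-biased merge and prank is the minor rank defined by prank(⟨⟩)=0 and prank(⟨t,a,u⟩)=rank(t)+1. -/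
/- For all rank-biased leftist heaps x and y:
min(prank x, prank y) ≤ prank(x∪y) ≤ prank x + prank y. -/
namespace BTree

variable {α : Type} [LinearOrder α]

lemma prank_balR (t : BTree α) (a : α) (u : BTree α) :
    prank (balR (node t a u)) = max (rank t) (rank u) + 1 := by
  simp only [balR]; split <;> simp [prank] <;> omega

lemma rank_mergeR_le (x y : BTree α) : rank (mergeR x y) ≤ rank x + rank y := by
  induction x, y using mergeR.induct with
  | case1 => simp [mergeR, rank]
  | case2 v b w ih =>
    rw [mergeR, rank_balR]; simp only [rank] at *; omega
  | case3 t a u ih =>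
    rw [mergeR, rank_balR]; simp only [rank] at *; omega
  | case4 t a u v b w h ih =>
    rw [mergeR, if_pos h, rank_balR]; simp only [rank] at *; omega
  | case5 t a u v b w h ih =>
    rw [mergeR, if_neg h, rank_balR]; simp only [rank] at *; omega

end BTree

open BTree in
theorem prank_merge_bounds (α : Type) [LinearOrder α]
    (x y : BTree α) (hxh : IsHeap x) (hxl : RankLeftist x)
    (hyh : IsHeap y) (hyl : RankLeftist y) :
    min (prank x) (prank y) ≤ prank (mergeR x y) ∧
    prank (mergeR x y) ≤ prank x + prank y := by
  match x, y with
  | nil, nil => simp [mergeR, prank]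
  | nil, node v b w =>
    rw [mergeR, prank_balR]
    have h1 : rank (mergeR (nil : BTree α) w) ≤ rank w := by simpa [rank] using rank_mergeR_le (nil : BTree α) w
    have h2 : rank w ≤ rank v := hyl.1
    simp only [prank]; omega
  | node t a u, nil =>
    rw [mergeR, prank_balR]
    have h1 : rank (mergeR u (nil : BTree α)) ≤ rank u := by simpa [rank] using rank_mergeR_le u (nil : BTree α)
    have h2 : rank u ≤ rank t := hxl.1
    simp only [prank]; omega
  | node t a u, node v b w =>
    by_cases h : a ≤ b
    · rw [mergeR, if_pos h, prank_balR]
      have h1 := rank_mergeR_le u (node v b w)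
      have h2 : rank u ≤ rank t := hxl.1
      have h3 : rank w ≤ rank v := hyl.1
      simp only [prank, rank] at *; omega
    · rw [mergeR, if_neg h, prank_balR]
      have h1 := rank_mergeR_le (node t a u) w
      have h2 : rank u ≤ rank t := hxl.1
      have h3 : rank w ≤ rank v := hyl.1
      simp only [prank, rank] at *; omega
end

section
/- For every k ≥ 2, let V_k = T_k ∪ U_k be the result of delete-min on W_k = ⟨T_k, 0, U_k⟩ under the rank-biased merge. Then rank(V_k) = k, the actual cost is T(T_k,U_k) = 2k, and with potential Φ(x) = rank(x) the amortized cost of delete-min on W_k equals rank(T_k) + rank(U_k) + rank(V_k) − rank(W_k) = 2k − 1. -/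
namespace BTree

/-- B_k^a : the perfect binary tree of height k with all labels a -/
def perfect : ℕ → ℕ → BTree ℕ
  | 0, _ => nil
  | k + 1, a => node (perfect k a) a (perfect k a)

/-- the trees T_k for k ≥ 2 (junk values below 2):
    T_2 = ⟨⟨0⟩,0,⟨2⟩⟩ and T_k = ⟨B_k^0, 0, T_{k-1}⟩ for k ≥ 3 -/
def Tk : ℕ → BTree ℕ
  | 0 => nil
  | 1 => nil
  | 2 => node (node nil 0 nil) 0 (node nil 2 nil)
  | k + 3 => node (perfect (k + 3) 0) 0 (Tk (k + 2))

/-- the trees U_k for k ≥ 2 (junk values below 2):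
    U_2 = ⟨B_2^1,1,⟨1⟩⟩ and U_k = ⟨B_k^1, 1, U_{k-1}⟩ for k ≥ 3 -/
def Uk : ℕ → BTree ℕ
  | 0 => nil
  | 1 => nil
  | 2 => node (perfect 2 1) 1 (node nil 1 nil)
  | k + 3 => node (perfect (k + 3) 1) 1 (Uk (k + 2))

/-- the trees W_k = ⟨T_k, 0, U_k⟩ -/
def Wk (k : ℕ) : BTree ℕ := node (Tk k) 0 (Uk k)

end BTree


namespace BTree

lemma perfect_rank (k a : ℕ) : rank (perfect k a) = k := by
  induction k with
  | zero => simp [perfect, rank]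
  | succ n ih => simp [perfect, rank, ih]

lemma Tk_rank : ∀ k, 2 ≤ k → rank (Tk k) = k
  | 0, h => by omega
  | 1, h => by omega
  | 2, _ => by simp [Tk, rank]
  | (m+3), _ => by
      have := Tk_rank (m+2) (by omega)
      simp [Tk, rank, this]

lemma Uk_rank : ∀ k, 2 ≤ k → rank (Uk k) = k
  | 0, h => by omega
  | 1, h => by omega
  | 2, _ => by simp [Uk, rank]
  | (m+3), _ => by
      have := Uk_rank (m+2) (by omega)
      simp [Uk, rank, this]

lemma Uk_node : ∀ k, 2 ≤ k → ∃ p q, Uk k = node p 1 q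
  | 0, h => by omega
  | 1, h => by omega
  | 2, _ => ⟨_, _, rfl⟩
  | (m+3), _ => ⟨_, _, rfl⟩

/-- A-lemma: merging ⟨2⟩ with U_k -/
lemma mergeA : ∀ k, 2 ≤ k →
    rank (mergeR (node nil 2 nil) (Uk k)) = k ∧
    cost (node nil 2 nil) (Uk k) = k + 1
  | 0, h => by omega
  | 1, h => by omega
  | 2, _ => by
      constructor
      · show rank (mergeR (node nil 2 nil) (node (node (node nil 1 nil) 1 (node nil 1 nil)) 1 (node nil 1 nil))) = 2
        simp [mergeR, balR, rank]
      · show cost (node nil 2 nil) (node (node (node nil 1 nil) 1 (node nil 1 nil)) 1 (node nil 1 nil)) = 3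
        simp [cost]
  | (m+3), _ => by
      obtain ⟨hr, hc⟩ := mergeA (m+2) (by omega)
      have hU : Uk (m+3) = node (perfect (m+3) 1) 1 (Uk (m+2)) := rfl
      constructor
      · rw [hU, mergeR, if_neg (by norm_num), balR,
          if_pos (by rw [hr, perfect_rank]; omega)]
        simp [rank, hr]
      · rw [hU, cost, if_neg (by norm_num), hc]

/-- B-lemma: merging T_j with U_k -/
lemma mergeB (k : ℕ) (hk : 2 ≤ k) : ∀ j, 2 ≤ j →
    rank (mergeR (Tk j) (Uk k)) = j ∧
    cost (Tk j) (Uk k) = j + k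
  | 0, h => by omega
  | 1, h => by omega
  | 2, _ => by
      obtain ⟨p, q, hU⟩ := Uk_node k hk
      obtain ⟨hr, hc⟩ := mergeA k hk
      rw [hU] at hr hc
      have hT : Tk 2 = node (node nil 0 nil) 0 (node nil 2 nil) := rfl
      constructor
      · rw [hT, hU, mergeR, if_pos (by norm_num), balR,
          if_neg (by rw [hr]; simp [rank]; omega)]
        simp [rank]
      · rw [hT, hU, cost, if_pos (by norm_num), hc]; omega
  | (m+3), _ => by
      obtain ⟨hr, hc⟩ := mergeB k hk (m+2) (by omega)
      obtain ⟨p, q, hU⟩ := Uk_node k hk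
      rw [hU] at hr hc
      have hT : Tk (m+3) = node (perfect (m+3) 0) 0 (Tk (m+2)) := rfl
      constructor
      · rw [hT, hU, mergeR, if_pos (by norm_num), balR,
          if_pos (by rw [hr, perfect_rank]; omega)]
        simp [rank, hr]
      · rw [hT, hU, cost, if_pos (by norm_num), hc]; omega

end BTree

/- For every k ≥ 2, with V_k = T_k ∪ U_k (rank-biased merge): rank(V_k) = k, the
actual cost is T(T_k,U_k) = 2k, and with potential Φ(x) = rank(x) the amortized cost
of delete-min on W_k equals rank(T_k) + rank(U_k) + rank(V_k) − rank(W_k) = 2k − 1. -/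
open BTree in
theorem Wk_deleteMin_amortized (k : ℕ) (hk : 2 ≤ k) :
    rank (mergeR (Tk k) (Uk k)) = k ∧
    cost (Tk k) (Uk k) = 2 * k ∧
    (cost (Tk k) (Uk k) : ℤ) + (rank (mergeR (Tk k) (Uk k)) : ℤ) - (rank (Wk k) : ℤ)
      = (rank (Tk k) : ℤ) + (rank (Uk k) : ℤ)
        + (rank (mergeR (Tk k) (Uk k)) : ℤ) - (rank (Wk k) : ℤ) ∧
    (rank (Tk k) : ℤ) + (rank (Uk k) : ℤ)
        + (rank (mergeR (Tk k) (Uk k)) : ℤ) - (rank (Wk k) : ℤ)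
      = 2 * (k : ℤ) - 1 := by
  obtain ⟨hr, hc⟩ := BTree.mergeB k hk k hk
  have hT := BTree.Tk_rank k hk
  have hU := BTree.Uk_rank k hk
  have hW : rank (Wk k) = k + 1 := by simp [Wk, rank, hU]
  refine ⟨hr, by omega, ?_, ?_⟩ <;> simp only [hr, hc, hT, hU, hW] <;> push_cast <;> ring
end

section
/- For every n ≥ 0, the golden tree G_n has exactly n nodes, is a weight-biased leftist tree (at every node the weight of the left subtree is at least the weight of the right subtree), and is a rank-biased leftist tree (at every node the rank of the left subtree is at least the rank of the right subtree); moreover n ↦ rank(G_n) is nondecreasing. -/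
inductive UTree : Type
  | nil : UTree
  | node : UTree → UTree → UTree

namespace UTree

def size : UTree → ℕ
  | nil => 0
  | node t u => size t + size u + 1

def rank : UTree → ℕ
  | nil => 0
  | node _ u => rank u + 1

def WeightLeftist : UTree → Prop
  | nil => True
  | node t u => size u ≤ size t ∧ WeightLeftist t ∧ WeightLeftist u

def RankLeftist : UTree → Prop
  | nil => True
  | node t u => rank u ≤ rank t ∧ RankLeftist t ∧ RankLeftist u

/-- unlabeled merge -/
def umerge : UTree → UTree → UTree
  | node t u, y => node (umerge y u) t
  | nil, node t u => node (umerge nil u) t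
  | nil, nil => nil
termination_by x y => size x + size y
decreasing_by all_goals (simp [size]; try omega)

end UTree

/-- Hofstadter's G-sequence, packaged with the invariant `L n ≤ n`. -/
noncomputable def hofstadterL' : (n : ℕ) → {m : ℕ // m ≤ n} := fun n =>
  Nat.strongRecOn n (fun n ih =>
    match n, ih with
    | 0, _ => ⟨0, Nat.le_refl 0⟩
    | n + 1, ih =>
      let a := ih n (Nat.lt_succ_self n)
      let b := ih a.1 (Nat.lt_succ_of_le a.2)
      ⟨n + 1 - b.1, Nat.sub_le _ _⟩)

/-- Hofstadter's G-sequence: L(0) = 0 and L(n) = n - L(L(n-1)). -/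
noncomputable def hL (n : ℕ) : ℕ := (hofstadterL' n).1

noncomputable def hR (n : ℕ) : ℕ := n - hL n

/-- the golden tree of order n -/
noncomputable def golden : ℕ → UTree
  | 0 => UTree.nil
  | n + 1 => UTree.node (golden (hL n)) (golden (hR n))
termination_by n => n
decreasing_by
  · exact Nat.lt_succ_of_le (hofstadterL' n).2
  · simp only [hR]; omega

/-!
Hofstadter's sequence `L` moves by steps of `0` or `1`, hence so does `R n = n - L n`, and
`R (n + 1) = L (L n) ≤ L (n + 1)`. Since the subtrees of `G (n + 1)` are `G (L n)` and `G (R n)`,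
the size and both leftist properties follow by induction along `L` and `R`: the weight condition
is `R n ≤ L n`, and the rank condition is the same inequality pushed through the monotonicity of
`n ↦ rank (G n)`. That monotonicity holds because `rank (G (n + 1)) = rank (G (R n)) + 1` and
`R n` advances by at most one step, to an index below `n`.
-/

theorem hL_zero : hL 0 = 0 := by
  simp only [hL, hofstadterL', Nat.strongRecOn]
  rw [WellFounded.fix_eq]

theorem hL_succ (n : ℕ) : hL (n + 1) = n + 1 - hL (hL n) := by
  simp only [hL, hofstadterL', Nat.strongRecOn]
  rw [WellFounded.fix_eq]

theorem hL_le (n : ℕ) : hL n ≤ n := (hofstadterL' n).2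

theorem hR_le (n : ℕ) : hR n ≤ n := Nat.sub_le _ _

theorem hR_succ (n : ℕ) : hR (n + 1) = hL (hL n) := by
  have := hL_le (hL n)
  have := hL_le n
  rw [hR, hL_succ]
  omega

theorem hL_succ_eq_or (n : ℕ) : hL (n + 1) = hL n ∨ hL (n + 1) = hL n + 1 := by
  induction n using Nat.strong_induction_on with
  | _ n ih =>
    cases n with
    | zero => simp [hL_succ, hL_zero]
    | succ m =>
      have h₁ := hL_succ m
      have h₂ := hL_succ (m + 1)
      have := hL_le (hL m)
      have := hL_le m
      rcases ih m m.lt_succ_self with h | h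
      · rw [h] at h₂
        omega
      · rw [h] at h₂
        rcases ih (hL m) (by omega) with h' | h' <;> omega

theorem hL_mono : Monotone hL :=
  monotone_nat_of_le_succ fun n => by rcases hL_succ_eq_or n with h | h <;> omega

theorem hR_succ_eq_or (n : ℕ) : hR (n + 1) = hR n ∨ hR (n + 1) = hR n + 1 := by
  have := hL_le n
  rcases hL_succ_eq_or n with h | h <;> simp only [hR, h] <;> omega

theorem hR_le_hL (n : ℕ) : hR n ≤ hL n := by
  cases n with
  | zero => simp [hR, hL_zero]
  | succ m =>
    rw [hR_succ]
    exact hL_mono ((hL_le m).trans m.le_succ)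

@[elab_as_elim]
theorem hL_hR_induction {P : ℕ → Prop} (zero : P 0)
    (succ : ∀ n, P (hL n) → P (hR n) → P (n + 1)) (n : ℕ) : P n := by
  induction n using Nat.strong_induction_on with
  | _ n ih =>
    cases n with
    | zero => exact zero
    | succ m =>
      exact succ m (ih _ (Nat.lt_succ_of_le (hL_le m))) (ih _ (Nat.lt_succ_of_le (hR_le m)))

theorem golden_zero : golden 0 = UTree.nil := by
  rw [golden]

theorem golden_succ (n : ℕ) : golden (n + 1) = UTree.node (golden (hL n)) (golden (hR n)) := by
  rw [golden]

theorem size_golden (n : ℕ) : (golden n).size = n := by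
  induction n using hL_hR_induction with
  | zero => rw [golden_zero, UTree.size]
  | succ n hl hr =>
    have := hL_le n
    rw [golden_succ, UTree.size, hl, hr, hR]
    omega

theorem rank_golden_le_succ (n : ℕ) : (golden n).rank ≤ (golden (n + 1)).rank := by
  induction n using Nat.strong_induction_on with
  | _ n ih =>
    cases n with
    | zero => simp [golden_zero, UTree.rank]
    | succ m =>
      rw [golden_succ m, golden_succ (m + 1)]
      simp only [UTree.rank, Nat.add_le_add_iff_right]
      rcases hR_succ_eq_or m with h | h <;> rw [h]
      exact ih _ (Nat.lt_succ_of_le (hR_le m))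

theorem rank_golden_mono : Monotone fun n => (golden n).rank :=
  monotone_nat_of_le_succ rank_golden_le_succ

theorem weightLeftist_golden (n : ℕ) : (golden n).WeightLeftist := by
  induction n using hL_hR_induction with
  | zero => rw [golden_zero]; trivial
  | succ n hl hr =>
    rw [golden_succ]
    exact ⟨by rw [size_golden, size_golden]; exact hR_le_hL n, hl, hr⟩

theorem rankLeftist_golden (n : ℕ) : (golden n).RankLeftist := by
  induction n using hL_hR_induction with
  | zero => rw [golden_zero]; trivial
  | succ n hl hr =>
    rw [golden_succ]
    exact ⟨rank_golden_mono (hR_le_hL n), hl, hr⟩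

/-- For every n, the golden tree G_n has exactly n nodes and is a weight-biased and a
rank-biased leftist tree; moreover n ↦ rank(G_n) is nondecreasing. -/
theorem golden_tree_leftist :
    (∀ n : ℕ, UTree.size (golden n) = n ∧ UTree.WeightLeftist (golden n) ∧
      UTree.RankLeftist (golden n)) ∧
    Monotone (fun n => UTree.rank (golden n)) :=
  ⟨fun n => ⟨size_golden n, weightLeftist_golden n, rankLeftist_golden n⟩, rank_golden_mono⟩
end

section
/- For every n ≥ 0, G_n = G_{L(n)} ∪ G_{R(n)}, where ∪ is the unlabeled merge defined by ⟨⟩∪⟨⟩ = ⟨⟩ and ⟨t,u⟩∪y = ⟨y∪u, t⟩. -/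
/-!
Write `m = L(n+1) - 1`; since `L(n+1) ≥ 1` the merge unfolds once:
`G_{L(n+1)} ∪ G_{R(n+1)} = ⟨G_{R(n+1)} ∪ G_{R(m)}, G_{L(m)}⟩`.
The identity `L(L(n+1) - 1) = R(n)`, a consequence of `L` growing by `0` or `1` at each step,
turns the right subtree into `G_{R(n)}` and gives `R(m) = R(L n)`; as `R(n+1) = L(L n)`,
the left subtree is `G_{L(L n)} ∪ G_{R(L n)}`, which is `G_{L n}` by induction.
-/

theorem UTree.umerge_node (t u y : UTree) : umerge (node t u) y = node (umerge y u) t := by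
  rw [umerge]

theorem hR_zero : hR 0 = 0 := by
  rw [hR, hL_zero]

theorem hL_succ_pos (n : ℕ) : 0 < hL (n + 1) := by
  have := hL_le (hL n)
  have := hL_le n
  rw [hL_succ]
  omega

theorem hL_hL_succ_sub_one (n : ℕ) : hL (hL (n + 1) - 1) = hR n := by
  cases n with
  | zero => simp [hL_succ, hL_zero, hR_zero]
  | succ k =>
    rw [hR_succ]
    have hk := hL_succ k
    have hk1 := hL_succ (k + 1)
    have := hL_le (hL k)
    rcases hL_succ_eq_or k with h | h
    · rw [h] at hk1
      rw [show hL (k + 1 + 1) - 1 = hL k by omega]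
    · rcases hL_succ_eq_or (hL k) with h' | h' <;> rw [h, h'] at hk1
      · rw [show hL (k + 1 + 1) - 1 = hL k + 1 by omega, h']
      · rw [show hL (k + 1 + 1) - 1 = hL k by omega]

/-- For every n, G_n = G_{L(n)} ∪ G_{R(n)} under the unlabeled merge. -/
theorem golden_selfRecreating (n : ℕ) :
    golden n = UTree.umerge (golden (hL n)) (golden (hR n)) := by
  induction n using Nat.strong_induction_on with
  | _ n ih =>
    cases n with
    | zero => rw [hL_zero, hR_zero, golden_zero, UTree.umerge]
    | succ n =>
      obtain ⟨m, hm⟩ := Nat.exists_eq_add_one.mpr (hL_succ_pos n)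
      have hLm : hL m = hR n := by simpa [hm] using hL_hL_succ_sub_one n
      have hRm : hR m = hR (hL n) := by
        have := hL_succ n
        have := hL_le n
        have := hL_le (hL n)
        simp only [hR, hLm]
        omega
      rw [hm, hR_succ, golden_succ, golden_succ, UTree.umerge_node, hLm, hRm,
        ← ih (hL n) (Nat.lt_succ_of_le (hL_le n))]
end

section
/- Every rank-biased leftist heap can be generated using only the operations empty (producing ⟨⟩), single(a) (producing ⟨⟨⟩,a,⟨⟩⟩), and union (the rank-biased merge ∪); that is, every rank-biased leftist heap lies in the smallest set of trees containing ⟨⟩ and all singleton trees ⟨⟨⟩,a,⟨⟩⟩ and closed under ∪. -/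
/-- the smallest set of trees containing ⟨⟩ and all singletons ⟨⟨⟩,a,⟨⟩⟩ and closed
under the rank-biased merge -/
inductive Reachable {α : Type} [LinearOrder α] : BTree α → Prop
  | empty : Reachable BTree.nil
  | single (a : α) : Reachable (BTree.node BTree.nil a BTree.nil)
  | union {x y : BTree α} : Reachable x → Reachable y → Reachable (BTree.mergeR x y)

/- Every rank-biased leftist heap can be generated using only empty, single,
and union. -/

namespace BTree

variable {α : Type} [LinearOrder α]

/-- inverse of `mergeR nil` on leftist heaps -/
def psi : BTree α → BTree α
  | nil => nil
  | node v b w => if rank w < rank v then node v b (psi w) else node w b (psi v)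

lemma psi_node (v : BTree α) (b : α) (w : BTree α) :
    ∃ p q, psi (node v b w) = node p b q := by
  unfold psi; split <;> exact ⟨_, _, rfl⟩

lemma rank_psi (u : BTree α) (h : RankLeftist u) : rank (psi u) = rank u := by
  induction u with
  | nil => rfl
  | node v b w ihv ihw =>
    obtain ⟨h1, h2, h3⟩ := h
    by_cases hr : rank w < rank v
    · simp [psi, hr, rank, ihw h3]
    · have : rank v = rank w := le_antisymm (not_lt.mp hr) h1
      simp [psi, hr, rank, ihv h2, this]

lemma size_psi (u : BTree α) : size (psi u) = size u := by
  induction u with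
  | nil => rfl
  | node v b w ihv ihw =>
    by_cases hr : rank w < rank v
    · simp [psi, hr, size, ihw]
    · simp [psi, hr, size, ihv]; omega

lemma leftist_psi (u : BTree α) (h : RankLeftist u) : RankLeftist (psi u) := by
  induction u with
  | nil => trivial
  | node v b w ihv ihw =>
    obtain ⟨h1, h2, h3⟩ := h
    by_cases hr : rank w < rank v
    · simp only [psi, if_pos hr]
      exact ⟨by rw [rank_psi w h3]; exact h1, h2, ihw h3⟩
    · simp only [psi, if_neg hr]
      exact ⟨by rw [rank_psi v h2]; exact not_lt.mp hr, h3, ihv h2⟩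

lemma leall_psi (a : α) (u : BTree α) (h : LeAll a u) : LeAll a (psi u) := by
  induction u with
  | nil => trivial
  | node v b w ihv ihw =>
    obtain ⟨h1, h2, h3⟩ := h
    by_cases hr : rank w < rank v
    · simp only [psi, if_pos hr]; exact ⟨h1, h2, ihw h3⟩
    · simp only [psi, if_neg hr]; exact ⟨h1, h3, ihv h2⟩

lemma heap_psi (u : BTree α) (h : IsHeap u) : IsHeap (psi u) := by
  induction u with
  | nil => trivial
  | node v b w ihv ihw =>
    obtain ⟨h1, h2, h3, h4⟩ := h
    by_cases hr : rank w < rank v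
    · simp only [psi, if_pos hr]; exact ⟨h1, leall_psi b w h2, h3, ihw h4⟩
    · simp only [psi, if_neg hr]; exact ⟨h2, leall_psi b v h1, h4, ihv h3⟩

lemma merge_nil_psi (u : BTree α) (h : RankLeftist u) : mergeR nil (psi u) = u := by
  induction u with
  | nil => rw [show psi (nil : BTree α) = nil from rfl, mergeR]
  | node v b w ihv ihw =>
    obtain ⟨h1, h2, h3⟩ := h
    by_cases hr : rank w < rank v
    · simp only [psi, if_pos hr]
      rw [mergeR, ihw h3]
      simp [balR, hr]
    · simp only [psi, if_neg hr]
      rw [mergeR, ihv h2]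
      have : ¬ rank v < rank w := not_lt.mpr h1
      have hvw : rank v = rank w := le_antisymm (not_lt.mp hr) h1
      simp [balR, this]

lemma merge_single_psi (a : α) (s : BTree α) (hl : RankLeftist s) (ha : LeAll a s) :
    mergeR (node nil a nil) (psi s) = node s a nil := by
  cases s with
  | nil =>
    show mergeR (node nil a nil) nil = node nil a nil
    rw [mergeR, mergeR]
    simp [balR, rank]
  | node v b w =>
    obtain ⟨p, q, hpq⟩ := psi_node v b w
    rw [hpq, mergeR, if_pos ha.1, ← hpq, merge_nil_psi _ hl]
    simp [balR, rank]

lemma merge_node_psi (t : BTree α) (a : α) (u : BTree α) (hu : RankLeftist u)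
    (hau : LeAll a u) (hne : u ≠ nil) :
    mergeR (node t a nil) (psi u) = balR (node t a u) := by
  cases u with
  | nil => exact absurd rfl hne
  | node v b w =>
    obtain ⟨p, q, hpq⟩ := psi_node v b w
    rw [hpq, mergeR, if_pos hau.1, ← hpq, merge_nil_psi _ hu]

lemma reachable_aux : ∀ (n : ℕ) (x : BTree α), size x ≤ n → IsHeap x → RankLeftist x →
    Reachable x := by
  intro n
  induction n with
  | zero =>
    intro x hs hh hl
    cases x with
    | nil => exact .empty
    | node t a u => simp [size] at hs
  | succ n ih =>
    intro x hs hh hl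
    cases x with
    | nil => exact .empty
    | node t a u =>
      obtain ⟨hat, hau, hht, hhu⟩ := hh
      obtain ⟨hr, hlt, hlu⟩ := hl
      simp only [size] at hs
      cases u with
      | nil =>
        have h1 : Reachable (psi t) :=
          ih (psi t) (by rw [size_psi]; omega) (heap_psi t hht) (leftist_psi t hlt)
        have := Reachable.union (Reachable.single a) h1
        rwa [merge_single_psi a t hlt hat] at this
      | node v b w =>
        by_cases hrr : rank (node v b w) < rank t
        · -- x = mergeR (node t a nil) (psi u)
          have h1 : Reachable (node t a nil) :=
            ih _ (by simp only [size] at hs ⊢; omega) ⟨hat, trivial, hht, trivial⟩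
              ⟨Nat.zero_le _, hlt, trivial⟩
          have h2 : Reachable (psi (node v b w)) :=
            ih _ (by rw [size_psi]; simp only [size] at hs ⊢; omega)
              (heap_psi _ hhu) (leftist_psi _ hlu)
          have := Reachable.union h1 h2
          rwa [merge_node_psi t a _ hlu hau (by simp), balR, if_pos hrr] at this
        · -- ranks equal; t must be a node
          have hre : rank t = rank (node v b w) := le_antisymm (not_lt.mp hrr) hr
          cases t with
          | nil => simp [rank] at hre
          | node t1 c t2 =>
            have h1 : Reachable (node (node v b w) a nil) :=
              ih _ (by simp only [size] at hs ⊢; omega)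
                ⟨hau, trivial, hhu, trivial⟩ ⟨Nat.zero_le _, hlu, trivial⟩
            have h2 : Reachable (psi (node t1 c t2)) :=
              ih _ (by rw [size_psi]; simp only [size] at hs ⊢; omega)
                (heap_psi _ hht) (leftist_psi _ hlt)
            have := Reachable.union h1 h2
            rwa [merge_node_psi _ a _ hlt hat (by simp), balR,
              if_neg (by rw [hre]; exact lt_irrefl _)] at this

end BTree

open BTree in
theorem reachable_of_rankLeftist_heap (α : Type) [LinearOrder α]
    (x : BTree α) (hh : IsHeap x) (hl : RankLeftist x) :
    Reachable x := by
  exact BTree.reachable_aux (size x) x le_rfl hh hl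
end
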